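/- The map (X₁,…,Xₙ) ↦ ‖(1/n) ∑ᵢ Xᵢ Xᵢᵀ‖₂^{1/2} from (ℝ^d)^n to ℝ is Lipschitz with constant n^{-1/2} with respect to the metric d((X₁,…,Xₙ),(Y₁,…,Yₙ)) = (∑ᵢ ‖Xᵢ − Yᵢ‖_{ℓ²}²)^{1/2}. -/

import Mathlib

/-!
Stack the points as the rows of a matrix `G`, so that `∑ᵢ XᵢXᵢᵀ = GᵀG` and the metric is the
Frobenius norm `‖G - H‖`. With `u = ‖GᵀG‖^{1/2}` and `v = ‖HᵀH‖^{1/2}`, the splitting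
`GᵀG - HᵀH = Gᵀ(G - H) + (G - H)ᵀH` and the bound `‖GᵀD‖ ≤ u ‖D‖` give
`|u² - v²| ≤ (u + v) ‖G - H‖`, hence `|u - v| ≤ ‖G - H‖`. The bound is Cauchy–Schwarz for the
trace pairing: `‖GᵀD‖² = tr(GGᵀ · DDᵀ) ≤ ‖GGᵀ‖ ‖DDᵀ‖ ≤ ‖GᵀG‖ ‖D‖²`.
-/

open Matrix

/-- The Frobenius (2-Schatten) norm of a real square matrix: `‖M‖₂ = √(trace(MᵀM))`. -/
noncomputable def frobNorm {d : ℕ} (M : Matrix (Fin d) (Fin d) ℝ) : ℝ :=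
  Real.sqrt ((Mᵀ * M).trace)

attribute [local instance] Matrix.frobeniusNormedAddCommGroup Matrix.frobeniusNormSMulClass

lemma Real.abs_sub_le_of_abs_sq_sub_le {u v c : ℝ} (hu : 0 ≤ u) (hv : 0 ≤ v) (hc : 0 ≤ c)
    (h : |u ^ 2 - v ^ 2| ≤ (u + v) * c) : |u - v| ≤ c := by
  rw [abs_le] at h ⊢
  constructor <;> nlinarith [h.1, h.2]

namespace Matrix

lemma sum_vecMulVec_eq_transpose_mul {l m n α : Type*} [Fintype m] [NonUnitalCommSemiring α]
    (A : m → l → α) (B : m → n → α) :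
    ∑ i, vecMulVec (A i) (B i) = (of A)ᵀ * of B := by
  ext j k
  simp [mul_apply, vecMulVec_apply, sum_apply]

variable {m n : Type*} [Fintype m] [Fintype n]

lemma frobenius_norm_eq_sqrt (A : Matrix m n ℝ) : ‖A‖ = √(∑ i, ∑ j, A i j ^ 2) := by
  simp_rw [frobenius_norm_def, Real.sqrt_eq_rpow, Real.norm_eq_abs, Real.rpow_two, sq_abs]

lemma frobenius_norm_sq (A : Matrix m n ℝ) : ‖A‖ ^ 2 = ∑ i, ∑ j, A i j ^ 2 := by
  rw [frobenius_norm_eq_sqrt, Real.sq_sqrt (by positivity)]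

lemma trace_transpose_mul_eq_sum (A B : Matrix m n ℝ) :
    (Aᵀ * B).trace = ∑ i, ∑ j, A i j * B i j := by
  rw [trace, Finset.sum_comm]
  simp [mul_apply]

lemma frobenius_norm_sq_eq_trace (A : Matrix m n ℝ) : ‖A‖ ^ 2 = (Aᵀ * A).trace := by
  simp_rw [frobenius_norm_sq, trace_transpose_mul_eq_sum, sq]

lemma trace_transpose_mul_le (A B : Matrix m n ℝ) : (Aᵀ * B).trace ≤ ‖A‖ * ‖B‖ := by
  simp_rw [trace_transpose_mul_eq_sum, frobenius_norm_eq_sqrt, ← Fintype.sum_prod_type']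
  exact Real.sum_mul_le_sqrt_mul_sqrt _ _ _

lemma frobenius_norm_mul_transpose_self (G : Matrix m n ℝ) : ‖G * Gᵀ‖ = ‖Gᵀ * G‖ := by
  refine (sq_eq_sq₀ (norm_nonneg _) (norm_nonneg _)).mp ?_
  simp only [frobenius_norm_sq_eq_trace, transpose_mul, transpose_transpose, Matrix.mul_assoc]
  rw [trace_mul_comm]
  simp only [Matrix.mul_assoc]

lemma frobenius_norm_transpose_mul_sq_le (G D : Matrix m n ℝ) :
    ‖Gᵀ * D‖ ^ 2 ≤ ‖Gᵀ * G‖ * ‖D‖ ^ 2 :=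
  calc ‖Gᵀ * D‖ ^ 2 = ((G * Gᵀ)ᵀ * (D * Dᵀ)).trace := by
        simp only [frobenius_norm_sq_eq_trace, transpose_mul, transpose_transpose,
          Matrix.mul_assoc]
        rw [trace_mul_comm]
        simp only [Matrix.mul_assoc]
    _ ≤ ‖G * Gᵀ‖ * ‖D * Dᵀ‖ := trace_transpose_mul_le _ _
    _ ≤ ‖Gᵀ * G‖ * (‖D‖ * ‖Dᵀ‖) := by
        rw [frobenius_norm_mul_transpose_self]
        gcongr
        exact frobenius_norm_mul _ _
    _ = ‖Gᵀ * G‖ * ‖D‖ ^ 2 := by rw [frobenius_norm_transpose, sq]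

lemma frobenius_norm_transpose_mul_le (G D : Matrix m n ℝ) :
    ‖Gᵀ * D‖ ≤ √‖Gᵀ * G‖ * ‖D‖ := by
  rw [← Real.sqrt_sq (norm_nonneg D), ← Real.sqrt_mul (norm_nonneg _)]
  exact Real.le_sqrt_of_sq_le (frobenius_norm_transpose_mul_sq_le G D)

lemma abs_sqrt_norm_transpose_mul_self_sub_le (G H : Matrix m n ℝ) :
    |√‖Gᵀ * G‖ - √‖Hᵀ * H‖| ≤ ‖G - H‖ := by
  refine Real.abs_sub_le_of_abs_sq_sub_le (Real.sqrt_nonneg _) (Real.sqrt_nonneg _)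
    (norm_nonneg _) ?_
  rw [Real.sq_sqrt (norm_nonneg _), Real.sq_sqrt (norm_nonneg _)]
  calc |‖Gᵀ * G‖ - ‖Hᵀ * H‖| ≤ ‖Gᵀ * G - Hᵀ * H‖ := abs_norm_sub_norm_le _ _
    _ = ‖Gᵀ * (G - H) + (G - H)ᵀ * H‖ := by
        rw [transpose_sub, Matrix.mul_sub, Matrix.sub_mul]
        abel_nf
    _ ≤ ‖Gᵀ * (G - H)‖ + ‖(G - H)ᵀ * H‖ := norm_add_le _ _
    _ = ‖Gᵀ * (G - H)‖ + ‖Hᵀ * (G - H)‖ := by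
        rw [← frobenius_norm_transpose ((G - H)ᵀ * H), transpose_mul, transpose_transpose]
    _ ≤ (√‖Gᵀ * G‖ + √‖Hᵀ * H‖) * ‖G - H‖ := by
        rw [add_mul]
        gcongr <;> exact frobenius_norm_transpose_mul_le _ _

end Matrix

lemma frobNorm_eq_norm {d : ℕ} (M : Matrix (Fin d) (Fin d) ℝ) : frobNorm M = ‖M‖ := by
  rw [frobNorm, ← frobenius_norm_sq_eq_trace, Real.sqrt_sq (norm_nonneg M)]

/-- The map `(X₁,…,Xₙ) ↦ ‖(1/n) ∑ᵢ Xᵢ Xᵢᵀ‖₂^{1/2}` is Lipschitz with constant `n^{-1/2}`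
with respect to the metric `d(X,Y) = (∑ᵢ ‖Xᵢ − Yᵢ‖_{ℓ²}²)^{1/2}`. -/
theorem frob_sqrt_lipschitz {d n : ℕ} (X Y : Fin n → Fin d → ℝ) :
    |Real.sqrt (frobNorm ((n : ℝ)⁻¹ • ∑ i, Matrix.vecMulVec (X i) (X i))) -
        Real.sqrt (frobNorm ((n : ℝ)⁻¹ • ∑ i, Matrix.vecMulVec (Y i) (Y i)))| ≤
      (Real.sqrt n)⁻¹ * Real.sqrt (∑ i, ∑ k, (X i k - Y i k) ^ 2) := by
  have sqrt_frobNorm_smul (M : Matrix (Fin d) (Fin d) ℝ) :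
      √(frobNorm ((n : ℝ)⁻¹ • M)) = (√n)⁻¹ * √‖M‖ := by
    rw [frobNorm_eq_norm, norm_smul, Real.norm_of_nonneg (by positivity),
      Real.sqrt_mul (by positivity), Real.sqrt_inv]
  have dist_eq : √(∑ i, ∑ k, (X i k - Y i k) ^ 2) = ‖of X - of Y‖ := by
    simp [frobenius_norm_eq_sqrt]
  rw [sum_vecMulVec_eq_transpose_mul, sum_vecMulVec_eq_transpose_mul, sqrt_frobNorm_smul,
    sqrt_frobNorm_smul, ← mul_sub, abs_mul, abs_of_nonneg (by positivity), dist_eq]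
  gcongr
  exact abs_sqrt_norm_transpose_mul_self_sub_le _ _
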